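/- Let f : ℝ^n → [0, ∞] be Borel measurable satisfying the midpoint condition of Lemma L4 (for every u, f(x) ≤ (1/2)(f(x+u)+f(x−u)) a.e.), let U be the set of points having a neighborhood on which f is essentially bounded, and let D be the set of points x such that every neighborhood of x contains a Borel set of positive Lebesgue measure on which f is finite. Then U is open and convex, D ⊆ closure(U), and f = ∞ almost everywhere on the complement of closure(U). -/

import Mathlib

/-!
By Fubini the hypothesis holds in the form: for a.e. `x`, `2 f x ≤ f (x + u) + f (x - u)` for
a.e. `u`. Essential bounds `a`, `b` of `f` on two balls of equal radius then give the bound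
`(a + b) / 2` on the ball of that radius around their midpoint, so the set `U` of points near
which `f` is essentially bounded is open and midpoint convex, hence convex.

If `f ≤ k` on a set `A` of positive measure and `p` is a Lebesgue density point of `A`, every `z`
close to `p` is the midpoint of `z + u`, `z - u` with both points in `A` for a positive-measure
set of `u`, so `f ≤ k` a.e. near `p` and `p ∈ U`. Every set of positive measure on which `f` is
finite contains such an `A`; this gives `D ⊆ closure U`, and `f = ⊤` a.e. off `closure U`.
-/

open MeasureTheory Set Metric Filter
open scoped ENNReal Topology

theorem dyadic_mem_of_midpoint_mem {D : Set ℝ} (h₀ : 0 ∈ D) (h₁ : 1 ∈ D)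
    (hmid : ∀ a ∈ D, ∀ b ∈ D, (a + b) / 2 ∈ D) :
    ∀ k j : ℕ, j ≤ 2 ^ k → (j : ℝ) / 2 ^ k ∈ D := by
  intro k
  induction k with
  | zero =>
    intro j hj
    interval_cases j <;> simpa
  | succ k ih =>
    intro j hj
    rw [pow_succ] at hj
    convert hmid _ (ih (j / 2) (by omega)) _ (ih (j - j / 2) (by omega)) using 1
    rw [Nat.cast_sub (Nat.div_le_self j 2), pow_succ]
    field_simp
    ring

theorem IsOpen.convex_of_midpoint_mem {E : Type*} [NormedAddCommGroup E] [NormedSpace ℝ E]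
    {s : Set E} (hs : IsOpen s) (hmid : ∀ x ∈ s, ∀ y ∈ s, midpoint ℝ x y ∈ s) :
    Convex ℝ s := by
  intro x hx y hy a b ha hb hab
  obtain ⟨r₁, hr₁, hx'⟩ := Metric.isOpen_iff.1 hs x hx
  obtain ⟨r₂, hr₂, hy'⟩ := Metric.isOpen_iff.1 hs y hy
  set r := min r₁ r₂
  set v := y - x
  have hD : ∀ k j : ℕ, j ≤ 2 ^ k → ball (x + ((j : ℝ) / 2 ^ k) • v) r ⊆ s := by
    refine dyadic_mem_of_midpoint_mem (D := {t | ball (x + t • v) r ⊆ s}) ?_ ?_ ?_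
    · simpa using (ball_subset_ball (min_le_left _ _)).trans hx'
    · simpa [v] using (ball_subset_ball (min_le_right _ _)).trans hy'
    · intro t ht t' ht' w hw
      -- `w` is the midpoint of its translates by `±((t - t') / 2) • v`
      have h := hmid _ (ht (show w + ((t - t') / 2) • v ∈ ball _ r from ?_)) _
        (ht' (show w - ((t - t') / 2) • v ∈ ball _ r from ?_))
      · convert h using 1
        rw [midpoint_eq_smul_add, invOf_eq_inv]
        module
      all_goals
        rw [mem_ball, dist_eq_norm] at hw ⊢
        convert hw using 2
        module
  obtain ⟨k, hk⟩ := pow_unbounded_of_one_lt (‖v‖ / r) one_lt_two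
  have h2k : (0 : ℝ) < 2 ^ k := by positivity
  set j := ⌊b * 2 ^ k⌋₊
  have hj : (j : ℝ) ≤ b * 2 ^ k := Nat.floor_le (by positivity)
  have hj' : b * 2 ^ k < j + 1 := Nat.lt_floor_add_one _
  have hjk : j ≤ 2 ^ k := Nat.floor_le_of_le (by push_cast; nlinarith)
  refine hD k j hjk ?_
  rw [mem_ball, dist_eq_norm]
  calc ‖a • x + b • y - (x + ((j : ℝ) / 2 ^ k) • v)‖ = |b - j / 2 ^ k| * ‖v‖ := by
        rw [← Real.norm_eq_abs, ← norm_smul, eq_sub_of_add_eq hab]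
        congr 1
        module
    _ ≤ 1 / 2 ^ k * ‖v‖ := by
        gcongr
        rw [abs_le]
        constructor <;> (field_simp; linarith)
    _ < r := by
        rw [div_lt_iff₀ (lt_min hr₁ hr₂)] at hk
        rw [div_mul_eq_mul_div, div_lt_iff₀ h2k]
        linarith

theorem two_mul_le_add_of_ae {α : Type*} [Add α] [Sub α] [MeasurableSpace α] {μ : Measure α}
    {f : α → ℝ≥0∞} {z : α} {O : Set α} {a b : ℝ≥0∞} (hO : μ O ≠ 0)
    (hz : ∀ᵐ u ∂μ, 2 * f z ≤ f (z + u) + f (z - u))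
    (hadd : ∀ᵐ u ∂μ, u ∈ O → f (z + u) ≤ a) (hsub : ∀ᵐ u ∂μ, u ∈ O → f (z - u) ≤ b) :
    2 * f z ≤ a + b := by
  obtain ⟨u, hu, hzu, hu_add, hu_sub⟩ :=
    Measure.exists_mem_of_measure_ne_zero_of_ae hO (ae_restrict_of_ae (hz.and (hadd.and hsub)))
  exact hzu.trans (add_le_add (hu_add hu) (hu_sub hu))

theorem ae_ae_two_mul_le_add {G : Type*} [AddGroup G] [MeasurableSpace G] [MeasurableAdd₂ G]
    [MeasurableSub₂ G] {μ : Measure G} [SFinite μ] {f : G → ℝ≥0∞} (hf : Measurable f)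
    (hmid : ∀ u, ∀ᵐ x ∂μ, 2 * f x ≤ f (x + u) + f (x - u)) :
    ∀ᵐ x ∂μ, ∀ᵐ u ∂μ, 2 * f x ≤ f (x + u) + f (x - u) := by
  have hmeas : MeasurableSet {q : G × G | 2 * f q.1 ≤ f (q.1 + q.2) + f (q.1 - q.2)} :=
    measurableSet_le (by fun_prop) (by fun_prop)
  exact (Measure.ae_ae_comm hmeas).2 (Eventually.of_forall hmid)

theorem exists_nat_measure_inter_le_ne_zero {α : Type*} [MeasurableSpace α] {μ : Measure α}
    {f : α → ℝ≥0∞} {B : Set α} (hB : μ B ≠ 0) (hBf : ∀ y ∈ B, f y < ⊤) :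
    ∃ k : ℕ, μ (B ∩ {y | f y ≤ k}) ≠ 0 := by
  have hcover : B = ⋃ k : ℕ, B ∩ {y | f y ≤ k} := by
    refine Subset.antisymm (fun y hy => ?_) (iUnion_subset fun _ => inter_subset_left)
    obtain ⟨k, hk⟩ := ENNReal.exists_nat_gt (hBf y hy).ne
    exact mem_iUnion.2 ⟨k, hy, hk.le⟩
  obtain ⟨k, hk⟩ := exists_measure_pos_of_not_measure_iUnion_null (hcover ▸ hB)
  exact ⟨k, hk.ne'⟩

def locallyEssBddSet {α : Type*} [TopologicalSpace α] [MeasurableSpace α] (μ : Measure α)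
    (f : α → ℝ≥0∞) : Set α :=
  {x | ∃ V ∈ 𝓝 x, ∃ M : ℝ≥0∞, M < ⊤ ∧ ∀ᵐ y ∂μ, y ∈ V → f y ≤ M}

theorem isOpen_locallyEssBddSet {α : Type*} [TopologicalSpace α] [MeasurableSpace α]
    {μ : Measure α} {f : α → ℝ≥0∞} : IsOpen (locallyEssBddSet μ f) := by
  refine isOpen_iff_mem_nhds.2 fun x ⟨V, hV, M, hM, hVM⟩ => ?_
  exact mem_of_superset (interior_mem_nhds.2 hV)
    fun y hy => ⟨V, mem_interior_iff_mem_nhds.1 hy, M, hM, hVM⟩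

section PseudoMetric

variable {α : Type*} [PseudoMetricSpace α] [MeasurableSpace α] {μ : Measure α} {f : α → ℝ≥0∞}

theorem ball_subset_locallyEssBddSet {p : α} {r : ℝ} {M : ℝ≥0∞} (hM : M < ⊤)
    (h : ∀ᵐ y ∂μ, y ∈ ball p r → f y ≤ M) : ball p r ⊆ locallyEssBddSet μ f :=
  fun _ hq => ⟨ball p r, isOpen_ball.mem_nhds hq, M, hM, h⟩

theorem exists_ball_of_mem_locallyEssBddSet {x : α} (hx : x ∈ locallyEssBddSet μ f) :
    ∃ r > 0, ∃ M < ⊤, ∀ᵐ y ∂μ, y ∈ ball x r → f y ≤ M := by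
  obtain ⟨V, hV, M, hM, hVM⟩ := hx
  obtain ⟨r, hr, hrV⟩ := Metric.mem_nhds_iff.1 hV
  exact ⟨r, hr, M, hM, hVM.mono fun y hy hyr => hy (hrV hyr)⟩

end PseudoMetric

section AddHaar

variable {E : Type*} [NormedAddCommGroup E] [NormedSpace ℝ E] [MeasurableSpace E] [BorelSpace E]
  [FiniteDimensional ℝ E] {μ : Measure E} [μ.IsAddHaarMeasure] {f : E → ℝ≥0∞}

theorem ae_two_mul_le_add_on_ball_midpoint
    (hf : ∀ᵐ z ∂μ, ∀ᵐ u ∂μ, 2 * f z ≤ f (z + u) + f (z - u)) {x y : E} {r : ℝ} {a b : ℝ≥0∞}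
    (hx : ∀ᵐ w ∂μ, w ∈ ball x r → f w ≤ a) (hy : ∀ᵐ w ∂μ, w ∈ ball y r → f w ≤ b) :
    ∀ᵐ z ∂μ, z ∈ ball (midpoint ℝ x y) r → 2 * f z ≤ a + b := by
  filter_upwards [hf] with z hz hzm
  set m := midpoint ℝ x y
  have hy_eq : y = m + m - x := by rw [midpoint_add_self]; abel
  have hO : μ (ball (x - m) (r - dist z m)) ≠ 0 :=
    (measure_ball_pos μ _ (sub_pos.2 (mem_ball.1 hzm))).ne'
  refine two_mul_le_add_of_ae hO hz ?_ ?_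
  · filter_upwards [(measurePreserving_add_left μ z).quasiMeasurePreserving.ae hx] with u hu huO
    refine hu ?_
    rw [mem_ball, dist_eq_norm] at huO ⊢
    calc ‖z + u - x‖ = ‖(z - m) + (u - (x - m))‖ := by congr 1; abel
      _ ≤ dist z m + ‖u - (x - m)‖ := by rw [dist_eq_norm]; exact norm_add_le _ _
      _ < r := by linarith
  · filter_upwards [(Measure.measurePreserving_sub_left μ z).quasiMeasurePreserving.ae hy]
      with u hu huO
    refine hu ?_
    rw [mem_ball, dist_eq_norm] at huO ⊢
    calc ‖z - u - y‖ = ‖(z - m) - (u - (x - m))‖ := by rw [hy_eq]; congr 1; abel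
      _ ≤ dist z m + ‖u - (x - m)‖ := by rw [dist_eq_norm]; exact norm_sub_le _ _
      _ < r := by linarith

theorem measure_setOf_add_mem_and_sub_mem_ne_zero {s : Set E} {p z : E} {r : ℝ}
    (h : 2 * μ (closedBall p (2 * r) \ s) < μ (closedBall 0 r)) (hz : z ∈ ball p r) :
    μ {u | z + u ∈ s ∧ z - u ∈ s} ≠ 0 := by
  intro h0
  set T := closedBall p (2 * r) \ s
  have hcover : closedBall (0 : E) r ⊆
      {u | z + u ∈ s ∧ z - u ∈ s} ∪ ((z + ·) ⁻¹' T ∪ Neg.neg ⁻¹' ((z + ·) ⁻¹' T)) := by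
    intro u hu
    rw [mem_closedBall, dist_zero_right] at hu
    rw [mem_ball] at hz
    have hadd : z + u ∈ closedBall p (2 * r) := by
      rw [mem_closedBall, dist_eq_norm]
      calc ‖z + u - p‖ = ‖(z - p) + u‖ := by congr 1; abel
        _ ≤ ‖z - p‖ + ‖u‖ := norm_add_le _ _
        _ ≤ 2 * r := by rw [← dist_eq_norm]; linarith
    have hsub : z - u ∈ closedBall p (2 * r) := by
      rw [mem_closedBall, dist_eq_norm]
      calc ‖z - u - p‖ = ‖(z - p) - u‖ := by congr 1; abel
        _ ≤ ‖z - p‖ + ‖u‖ := norm_sub_le _ _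
        _ ≤ 2 * r := by rw [← dist_eq_norm]; linarith
    simp only [T, mem_union, mem_ofPred_eq, mem_preimage, Set.mem_sdiff, ← sub_eq_add_neg]
    tauto
  have hle := (measure_mono (μ := μ) hcover).trans
    ((measure_union_le _ _).trans (add_le_add_right (measure_union_le _ _) _))
  rw [h0, zero_add, Measure.measure_preimage_neg, measure_preimage_add, ← two_mul] at hle
  exact hle.not_gt h

theorem ae_exists_closedBall_sdiff_lt {s : Set E} (hs : MeasurableSet s) :
    ∀ᵐ p ∂μ, p ∈ s → ∃ r > 0, 2 * μ (closedBall p (2 * r) \ s) < μ (closedBall 0 r) := by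
  filter_upwards [Besicovitch.ae_tendsto_measure_inter_div_of_measurableSet μ hs.compl]
    with p hp hps
  rw [indicator_of_notMem (notMem_compl_iff.2 hps)] at hp
  set c : ℝ≥0∞ := 2 ^ Module.finrank ℝ E
  have hc0 : 2 * c ≠ 0 := by positivity
  have hctop : 2 * c ≠ ⊤ := by finiteness
  obtain ⟨ρ, hρ, hρ0⟩ :=
    ((hp.eventually (gt_mem_nhds (ENNReal.inv_pos.2 hctop))).and self_mem_nhdsWithin).exists
  rw [show ρ = 2 * (ρ / 2) by ring] at hρ
  set r := ρ / 2
  have hr : 0 < r := half_pos hρ0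
  refine ⟨r, hr, ?_⟩
  have hball : μ (closedBall p (2 * r)) = c * μ (closedBall 0 r) := by
    rw [Measure.addHaar_closedBall_mul μ p zero_le_two hr.le, ENNReal.ofReal_pow zero_le_two,
      ENNReal.ofReal_ofNat]
  rw [ENNReal.div_lt_iff (Or.inl (measure_closedBall_pos μ p (by positivity)).ne')
    (Or.inl measure_closedBall_lt_top.ne), hball, inter_comm, ← sdiff_eq] at hρ
  calc 2 * μ (closedBall p (2 * r) \ s) < 2 * ((2 * c)⁻¹ * (c * μ (closedBall 0 r))) := by
        gcongr
        exact ENNReal.ofNat_ne_top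
    _ = (2 * c) * (2 * c)⁻¹ * μ (closedBall 0 r) := by ring
    _ = μ (closedBall 0 r) := by rw [ENNReal.mul_inv_cancel hc0 hctop, one_mul]

theorem exists_mem_ae_le_on_ball
    (hf : ∀ᵐ z ∂μ, ∀ᵐ u ∂μ, 2 * f z ≤ f (z + u) + f (z - u)) {s : Set E}
    (hs : MeasurableSet s) (hμs : μ s ≠ 0) {M : ℝ≥0∞} (hM : ∀ y ∈ s, f y ≤ M) :
    ∃ p ∈ s, ∃ r > 0, ∀ᵐ z ∂μ, z ∈ ball p r → f z ≤ M := by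
  obtain ⟨p, hps, hp⟩ := Measure.exists_mem_of_measure_ne_zero_of_ae hμs
    (ae_restrict_of_ae (ae_exists_closedBall_sdiff_lt (μ := μ) hs))
  obtain ⟨r, hr, hsmall⟩ := hp hps
  refine ⟨p, hps, r, hr, ?_⟩
  filter_upwards [hf] with z hz hzp
  have h2 := two_mul_le_add_of_ae (measure_setOf_add_mem_and_sub_mem_ne_zero hsmall hzp) hz
    (Eventually.of_forall fun u hu => hM _ hu.1) (Eventually.of_forall fun u hu => hM _ hu.2)
  rwa [← two_mul, ENNReal.mul_le_mul_iff_right two_ne_zero ENNReal.ofNat_ne_top] at h2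

theorem midpoint_mem_locallyEssBddSet
    (hf : ∀ᵐ z ∂μ, ∀ᵐ u ∂μ, 2 * f z ≤ f (z + u) + f (z - u)) {x y : E}
    (hx : x ∈ locallyEssBddSet μ f) (hy : y ∈ locallyEssBddSet μ f) :
    midpoint ℝ x y ∈ locallyEssBddSet μ f := by
  obtain ⟨r₁, hr₁, a, ha, hxa⟩ := exists_ball_of_mem_locallyEssBddSet hx
  obtain ⟨r₂, hr₂, b, hb, hyb⟩ := exists_ball_of_mem_locallyEssBddSet hy
  have hab := ae_two_mul_le_add_on_ball_midpoint hf
    (hxa.mono fun w hw hwr => hw (ball_subset_ball (min_le_left r₁ r₂) hwr))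
    (hyb.mono fun w hw hwr => hw (ball_subset_ball (min_le_right r₁ r₂) hwr))
  refine ball_subset_locallyEssBddSet (ENNReal.add_lt_top.2 ⟨ha, hb⟩)
    (hab.mono fun z hz hzr => le_trans ?_ (hz hzr)) (mem_ball_self (lt_min hr₁ hr₂))
  exact le_mul_of_one_le_left' one_le_two

theorem convex_locallyEssBddSet
    (hf : ∀ᵐ z ∂μ, ∀ᵐ u ∂μ, 2 * f z ≤ f (z + u) + f (z - u)) :
    Convex ℝ (locallyEssBddSet μ f) :=
  isOpen_locallyEssBddSet.convex_of_midpoint_mem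
    fun _ hx _ hy => midpoint_mem_locallyEssBddSet hf hx hy

theorem inter_locallyEssBddSet_nonempty (hf : Measurable f)
    (hmid : ∀ᵐ z ∂μ, ∀ᵐ u ∂μ, 2 * f z ≤ f (z + u) + f (z - u)) {B : Set E}
    (hB : MeasurableSet B) (hB0 : μ B ≠ 0) (hBf : ∀ y ∈ B, f y < ⊤) :
    (B ∩ locallyEssBddSet μ f).Nonempty := by
  obtain ⟨k, hk⟩ := exists_nat_measure_inter_le_ne_zero hB0 hBf
  obtain ⟨p, hp, r, hr, hpr⟩ :=
    exists_mem_ae_le_on_ball hmid (hB.inter (hf measurableSet_Iic)) hk fun _ hy => hy.2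
  exact ⟨p, hp.1, ball_subset_locallyEssBddSet (ENNReal.natCast_lt_top k) hpr (mem_ball_self hr)⟩

end AddHaar

theorem midpoint_convex_structure_general (n : ℕ)
    (f : EuclideanSpace ℝ (Fin n) → ENNReal) (hf : Measurable f)
    (hmid : ∀ u : EuclideanSpace ℝ (Fin n),
      ∀ᵐ x ∂(volume : Measure (EuclideanSpace ℝ (Fin n))),
        2 * f x ≤ f (x + u) + f (x - u))
    (U : Set (EuclideanSpace ℝ (Fin n)))
    (hU : U = {x | ∃ V ∈ nhds x, ∃ M : ENNReal, M < ⊤ ∧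
        ∀ᵐ y ∂(volume : Measure (EuclideanSpace ℝ (Fin n))), y ∈ V → f y ≤ M})
    (D : Set (EuclideanSpace ℝ (Fin n)))
    (hD : D = {x | ∀ V ∈ nhds x, ∃ B : Set (EuclideanSpace ℝ (Fin n)),
        MeasurableSet B ∧ B ⊆ V ∧ 0 < volume B ∧ ∀ y ∈ B, f y < ⊤}) :
    IsOpen U ∧ Convex ℝ U ∧ D ⊆ closure U ∧
      ∀ᵐ x ∂(volume : Measure (EuclideanSpace ℝ (Fin n))),
        x ∉ closure U → f x = ⊤ := by
  have hmid' := ae_ae_two_mul_le_add hf hmid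
  change U = locallyEssBddSet volume f at hU
  subst hU hD
  refine ⟨isOpen_locallyEssBddSet, convex_locallyEssBddSet hmid', ?_, ?_⟩
  · refine fun x hx => mem_closure_iff_nhds.2 fun V hV => ?_
    obtain ⟨B, hB, hBV, hB0, hBf⟩ := hx V hV
    exact (inter_locallyEssBddSet_nonempty hf hmid' hB hB0.ne' hBf).mono
      (inter_subset_inter_left _ hBV)
  · have hnull : volume ((closure (locallyEssBddSet volume f))ᶜ ∩ {x | f x < ⊤}) = 0 := by
      by_contra h
      obtain ⟨x, ⟨hx, -⟩, hxU⟩ := inter_locallyEssBddSet_nonempty hf hmid'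
        (isClosed_closure.measurableSet.compl.inter (hf measurableSet_Iio)) h fun _ hy => hy.2
      exact hx (subset_closure hxU)
    refine ae_iff.2 (measure_mono_null (fun x hx => ?_) hnull)
    simp only [mem_ofPred_eq, Classical.not_imp] at hx
    exact ⟨hx.1, lt_top_iff_ne_top.2 hx.2⟩

theorem midpoint_convex_structure (n : ℕ)
    (f : EuclideanSpace ℝ (Fin n) → ENNReal) (hf : Measurable f)
    (hfin : 0 < volume {x | f x < ⊤})
    (hmid : ∀ u : EuclideanSpace ℝ (Fin n),
      ∀ᵐ x ∂(volume : Measure (EuclideanSpace ℝ (Fin n))),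
        2 * f x ≤ f (x + u) + f (x - u))
    (U : Set (EuclideanSpace ℝ (Fin n)))
    (hU : U = {x | ∃ V ∈ nhds x, ∃ M : ENNReal, M < ⊤ ∧
        ∀ᵐ y ∂(volume : Measure (EuclideanSpace ℝ (Fin n))), y ∈ V → f y ≤ M})
    (D : Set (EuclideanSpace ℝ (Fin n)))
    (hD : D = {x | ∀ V ∈ nhds x, ∃ B : Set (EuclideanSpace ℝ (Fin n)),
        MeasurableSet B ∧ B ⊆ V ∧ 0 < volume B ∧ ∀ y ∈ B, f y < ⊤}) :
    IsOpen U ∧ Convex ℝ U ∧ D ⊆ closure U ∧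
      ∀ᵐ x ∂(volume : Measure (EuclideanSpace ℝ (Fin n))),
        x ∉ closure U → f x = ⊤ :=
  midpoint_convex_structure_general n f hf hmid U hU D hD
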